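/- arXiv:1211.2125 — 3 statements merged into one kernel-verified Lean document; each statement's English description precedes it below -/
import Mathlib

section
/- Let ω ∈ ℝ^d with ω·ν ≠ 0 for all nonzero ν ∈ ℤ^d, and suppose that lim_{n→∞} 2^{-n} log(1/α_n(ω)) = 0, where α_n(ω) := min{|ω·ν| : 0 < |ν| ≤ 2^n}. Then for every ξ > 0 there exists a constant C₀ > 0 such that C₀ |ω·ν| ≥ e^{-ξ|ν|} for all nonzero ν ∈ ℤ^d. -/
/-!
Since `2⁻ⁿ log (1/αₙ) → 0`, for `n ≥ N` we have `αₙ ≥ exp (-(ξ/2) 2ⁿ)`. Given `ν ≠ 0`, pick `n` with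
`|ν| ≤ 2ⁿ ≤ 2|ν|` and put `k = max n N`; then `|ω·ν| ≥ α_k ≥ exp (-(ξ/2) 2ᵏ)` and
`2ᵏ ≤ 2|ν| + 2ᴺ`, so `C₀ = exp ((ξ/2) 2ᴺ)` works.
-/

open scoped BigOperators

noncomputable def alphaSeq (d : ℕ) (ω : Fin d → ℝ) (n : ℕ) : ℝ :=
  sInf {x : ℝ | ∃ ν : Fin d → ℤ, ν ≠ 0 ∧ (∑ i, (ν i).natAbs) ≤ 2 ^ n ∧
    x = |∑ i, ω i * (ν i : ℝ)|}

open Filter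

def alphaSet (d : ℕ) (ω : Fin d → ℝ) (n : ℕ) : Set ℝ :=
  {x : ℝ | ∃ ν : Fin d → ℤ, ν ≠ 0 ∧ (∑ i, (ν i).natAbs) ≤ 2 ^ n ∧
    x = |∑ i, ω i * (ν i : ℝ)|}

section alphaSeq

variable {d : ℕ} (ω : Fin d → ℝ) (n : ℕ)

theorem alphaSeq_eq_sInf_alphaSet : alphaSeq d ω n = sInf (alphaSet d ω n) := rfl

theorem alphaSet_finite : (alphaSet d ω n).Finite := by
  refine ((Set.finite_Icc (-(2 ^ n : Fin d → ℤ)) (2 ^ n)).image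
    fun ν => |∑ i, ω i * (ν i : ℝ)|).subset ?_
  rintro x ⟨ν, -, hν, rfl⟩
  refine ⟨ν, ⟨fun i => ?_, fun i => ?_⟩, rfl⟩ <;>
  · have hi : |ν i| ≤ 2 ^ n := by
      rw [Int.abs_eq_natAbs]
      exact_mod_cast (Finset.single_le_sum (fun j _ => Nat.zero_le _) (Finset.mem_univ i)).trans hν
    have := abs_le.mp hi
    simp only [Pi.neg_apply, Pi.pow_apply, Pi.ofNat_apply]
    omega

theorem alphaSet_nonempty (hd : 0 < d) : (alphaSet d ω n).Nonempty := by
  refine ⟨_, Pi.single ⟨0, hd⟩ 1, ?_, ?_, rfl⟩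
  · exact (Pi.single_ne_zero_iff).mpr one_ne_zero
  · simp [Pi.single_apply, apply_ite Int.natAbs, Nat.one_le_two_pow]

theorem alphaSeq_le_abs {ν : Fin d → ℤ} (hν : ν ≠ 0) (hνn : (∑ i, (ν i).natAbs) ≤ 2 ^ n) :
    alphaSeq d ω n ≤ |∑ i, ω i * (ν i : ℝ)| :=
  csInf_le ⟨0, by rintro x ⟨ν, -, -, rfl⟩; exact abs_nonneg _⟩ ⟨ν, hν, hνn, rfl⟩

theorem alphaSeq_pos (hd : 0 < d) (hω : ∀ ν : Fin d → ℤ, ν ≠ 0 → (∑ i, ω i * (ν i : ℝ)) ≠ 0) :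
    0 < alphaSeq d ω n := by
  obtain ⟨ν, hν, -, hα⟩ := (alphaSet_nonempty ω n hd).csInf_mem (alphaSet_finite ω n)
  rw [alphaSeq_eq_sInf_alphaSet, hα]
  exact abs_pos.mpr (hω ν hν)

end alphaSeq

theorem eventually_exp_le_of_tendsto {a : ℕ → ℝ} (ha : ∀ n, 0 < a n)
    (hlim : Tendsto (fun n => (2 : ℝ)⁻¹ ^ n * Real.log (1 / a n)) atTop (nhds 0))
    {ε : ℝ} (hε : 0 < ε) : ∀ᶠ n in atTop, Real.exp (-(ε * 2 ^ n)) ≤ a n := by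
  filter_upwards [hlim.eventually_lt_const hε] with n hn
  rw [inv_pow, one_div, Real.log_inv, inv_mul_lt_iff₀ (by positivity)] at hn
  exact ((Real.lt_log_iff_exp_lt (ha n)).mp (by linarith)).le

theorem Nat.exists_le_pow_le_mul {b m : ℕ} (hb : 1 < b) (hm : m ≠ 0) :
    ∃ n, m ≤ b ^ n ∧ b ^ n ≤ b * m :=
  ⟨Nat.log b m + 1, (Nat.lt_pow_succ_log_self hb m).le,
    by rw [pow_succ']; exact Nat.mul_le_mul_left b (Nat.pow_log_le_self b hm)⟩

theorem stmt2 (d : ℕ) (hd : 0 < d) (ω : Fin d → ℝ)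
    (hω : ∀ ν : Fin d → ℤ, ν ≠ 0 → (∑ i, ω i * (ν i : ℝ)) ≠ 0)
    (hlim : Filter.Tendsto (fun n : ℕ => (2 : ℝ)⁻¹ ^ n * Real.log (1 / alphaSeq d ω n))
      Filter.atTop (nhds 0)) :
    ∀ ξ : ℝ, 0 < ξ → ∃ C₀ : ℝ, 0 < C₀ ∧ ∀ ν : Fin d → ℤ, ν ≠ 0 →
      Real.exp (-ξ * (∑ i, (ν i).natAbs : ℝ)) ≤ C₀ * |∑ i, ω i * (ν i : ℝ)| := by
  intro ξ hξ
  obtain ⟨N, hN⟩ := eventually_atTop.mp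
    (eventually_exp_le_of_tendsto (fun n => alphaSeq_pos ω n hd hω) hlim (half_pos hξ))
  refine ⟨Real.exp (ξ / 2 * 2 ^ N), Real.exp_pos _, fun ν hν => ?_⟩
  set m := ∑ i, (ν i).natAbs with hm
  have hm0 : m ≠ 0 := by simpa [hm, Finset.sum_eq_zero_iff, funext_iff] using hν
  obtain ⟨n, hmn, hnm⟩ := Nat.exists_le_pow_le_mul one_lt_two hm0
  set k := max n N
  have hmk : m ≤ 2 ^ k := hmn.trans (Nat.pow_le_pow_right two_pos (le_max_left n N))
  have hk : (2 : ℝ) ^ k ≤ 2 * m + 2 ^ N := by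
    rw [(pow_right_mono₀ one_le_two).map_max]
    have hn : (2 : ℝ) ^ n ≤ 2 * m := by exact_mod_cast hnm
    exact max_le (hn.trans (le_add_of_nonneg_right (by positivity)))
      (le_add_of_nonneg_left (by positivity))
  rw [← Nat.cast_sum, ← hm]
  calc Real.exp (-ξ * m)
      = Real.exp (ξ / 2 * 2 ^ N) * Real.exp (-(ξ / 2 * (2 * m + 2 ^ N))) := by
        rw [← Real.exp_add]; ring_nf
    _ ≤ Real.exp (ξ / 2 * 2 ^ N) * Real.exp (-(ξ / 2 * 2 ^ k)) := by gcongr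
    _ ≤ Real.exp (ξ / 2 * 2 ^ N) * alphaSeq d ω k := by gcongr; exact hN k (le_max_right n N)
    _ ≤ Real.exp (ξ / 2 * 2 ^ N) * |∑ i, ω i * (ν i : ℝ)| := by
        gcongr; exact alphaSeq_le_abs ω k hν hmk
end

section
/- Fix a ∈ ℝ with a ≠ 0 and define D(ε, s) := -ε s² + i s + ε a for ε ∈ ℝ and s ∈ ℝ. Then for all ε with |ε| sufficiently small (depending only on a) and all s ∈ ℝ one has |D(ε, s)| ≥ max{|aε|, |s|}. -/
/-!
Writing `D(ε, s) = ε (a - s²) + i s`, one has `|D|² = ε² (a - s²)² + s²`, which is at least `s²`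
trivially, and exceeds `a² ε²` by `s² (1 - 2 a ε² + ε² s²) ≥ 0` as soon as `2 |a| ε² ≤ 1`.
-/

open Complex

lemma neg_mul_sq_add_I_mul_add_eq (ε a s : ℝ) :
    (-(ε : ℂ) * s ^ 2 + I * s + ε * a : ℂ) = ((ε * (a - s ^ 2) : ℝ) : ℂ) + s * I := by
  push_cast
  ring

lemma sq_mul_le_sq_mul_sub_sq_add_sq {a ε : ℝ} (h : 2 * |a| * ε ^ 2 ≤ 1) (s : ℝ) :
    (a * ε) ^ 2 ≤ (ε * (a - s ^ 2)) ^ 2 + s ^ 2 := by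
  have hgap : (ε * (a - s ^ 2)) ^ 2 + s ^ 2 - (a * ε) ^ 2
      = s ^ 2 * (1 - 2 * a * ε ^ 2) + (ε * s ^ 2) ^ 2 := by ring
  have ha : 2 * a * ε ^ 2 ≤ 1 := by nlinarith [le_abs_self a, sq_nonneg ε]
  nlinarith [mul_nonneg (sq_nonneg s) (sub_nonneg.2 ha), sq_nonneg (ε * s ^ 2)]

lemma two_mul_abs_mul_sq_le_one {a ε : ℝ} (hε : |ε| ≤ 1 / (|a| + 1)) :
    2 * |a| * ε ^ 2 ≤ 1 := by
  have hpos : 0 < |a| + 1 := by positivity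
  have hε' : |ε| * (|a| + 1) ≤ 1 := (le_div_iff₀ hpos).1 hε
  nlinarith [abs_nonneg ε, abs_nonneg a, sq_abs ε, sq_nonneg (|ε| * |a|)]

theorem stmt3_general (a : ℝ) :
    ∃ ε₀ : ℝ, 0 < ε₀ ∧ ∀ ε : ℝ, |ε| ≤ ε₀ → ∀ s : ℝ,
      max |a * ε| |s| ≤ ‖(-(ε : ℂ) * s ^ 2 + Complex.I * s + ε * a : ℂ)‖ := by
  refine ⟨1 / (|a| + 1), by positivity, fun ε hε s => ?_⟩
  rw [neg_mul_sq_add_I_mul_add_eq, norm_add_mul_I]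
  exact max_le
    (Real.abs_le_sqrt (sq_mul_le_sq_mul_sub_sq_add_sq (two_mul_abs_mul_sq_le_one hε) s))
    (Real.abs_le_sqrt (le_add_of_nonneg_left (sq_nonneg _)))

theorem stmt3 (a : ℝ) (ha : a ≠ 0) :
    ∃ ε₀ : ℝ, 0 < ε₀ ∧ ∀ ε : ℝ, |ε| ≤ ε₀ → ∀ s : ℝ,
      max |a * ε| |s| ≤ ‖(-(ε : ℂ) * s ^ 2 + Complex.I * s + ε * a : ℂ)‖ :=
  stmt3_general a
end

section
/- Let b ∈ ℝ with b ≠ 0, let n ≥ 1 be an integer, and define D_V(ε, s) := i s (1 + i ε s) + b ε^n for real ε, s. Then there exists ε₁ > 0 such that for all |ε| < ε₁ and all s ∈ ℝ one has |D_V(ε, s)| ≥ max{|s|, |b| |ε|^n}. -/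
open Complex

/-! Writing `D = (bεⁿ - εs²) + s i`, one has `|D|² - (bεⁿ)² = ε²s⁴ + s²(1 - 2bεⁿ⁺¹)`,
which is nonnegative as soon as `2bεⁿ⁺¹ ≤ 1`; and `|D| ≥ |Im D| = |s|` always. -/

lemma sq_le_sq_sub_mul_sq_add_sq {a e : ℝ} (h : 2 * a * e ≤ 1) (s : ℝ) :
    a ^ 2 ≤ (a - e * s ^ 2) ^ 2 + s ^ 2 := by
  nlinarith [sq_nonneg (e * s ^ 2), mul_nonneg (sq_nonneg s) (sub_nonneg.2 h)]

lemma abs_le_norm_of_sq_le {a : ℝ} {z : ℂ} (h : a ^ 2 ≤ z.re ^ 2 + z.im ^ 2) : |a| ≤ ‖z‖ := by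
  rw [← abs_norm z, ← sq_le_sq, Complex.sq_norm, Complex.normSq_apply]
  nlinarith

lemma two_mul_mul_pow_succ_le_one {b ε : ℝ} (hε : |ε| < 1 / (1 + 2 * |b|)) (n : ℕ) :
    2 * b * ε ^ (n + 1) ≤ 1 := by
  have hpos : 0 < 1 + 2 * |b| := by positivity
  have hsmall : (1 + 2 * |b|) * |ε| < 1 := by rwa [lt_div_iff₀ hpos, mul_comm] at hε
  have hε1 : |ε| ≤ 1 := by nlinarith [abs_nonneg b, abs_nonneg ε]
  calc 2 * b * ε ^ (n + 1) ≤ 2 * |b| * |ε| ^ (n + 1) := by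
        rw [mul_assoc, mul_assoc, ← abs_pow, ← abs_mul]
        linarith [le_abs_self (b * ε ^ (n + 1))]
    _ ≤ 2 * |b| * |ε| := by
        gcongr
        exact pow_le_of_le_one (abs_nonneg ε) hε1 n.succ_ne_zero
    _ ≤ 1 := by nlinarith [abs_nonneg ε]

section

variable (b ε s : ℝ) (n : ℕ)

lemma re_I_mul_add_mul_pow :
    (I * s * (1 + I * ε * s) + (b : ℂ) * ε ^ n).re = b * ε ^ n - ε * s ^ 2 := by
  simp only [← ofReal_pow, add_re, mul_re, I_re, ofReal_re, zero_mul, I_im, ofReal_im, mul_zero,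
    sub_self, one_re, mul_im, one_mul, zero_add, add_zero, mul_one, add_im, one_im, zero_sub,
    sub_zero]
  ring

lemma im_I_mul_add_mul_pow : (I * s * (1 + I * ε * s) + (b : ℂ) * ε ^ n).im = s := by
  simp [← ofReal_pow]

end

theorem stmt11_general (b : ℝ) (n : ℕ) :
    ∃ ε₁ : ℝ, 0 < ε₁ ∧ ∀ ε : ℝ, |ε| < ε₁ → ∀ s : ℝ,
      max |s| (|b| * |ε| ^ n) ≤
        ‖Complex.I * s * (1 + Complex.I * ε * s) + (b : ℂ) * ε ^ n‖ := by
  refine ⟨1 / (1 + 2 * |b|), by positivity, fun ε hε s => max_le ?_ ?_⟩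
  · simpa only [im_I_mul_add_mul_pow] using abs_im_le_norm (I * s * (1 + I * ε * s) + b * ε ^ n)
  · have hsmall : 2 * (b * ε ^ n) * ε ≤ 1 := by
      simpa only [mul_assoc, pow_succ] using two_mul_mul_pow_succ_le_one hε n
    rw [← abs_pow, ← abs_mul]
    apply abs_le_norm_of_sq_le
    rw [re_I_mul_add_mul_pow, im_I_mul_add_mul_pow]
    exact sq_le_sq_sub_mul_sq_add_sq hsmall s

theorem stmt11 (b : ℝ) (hb : b ≠ 0) (n : ℕ) (hn : 1 ≤ n) :
    ∃ ε₁ : ℝ, 0 < ε₁ ∧ ∀ ε : ℝ, |ε| < ε₁ → ∀ s : ℝ,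
      max |s| (|b| * |ε| ^ n) ≤
        ‖Complex.I * s * (1 + Complex.I * ε * s) + (b : ℂ) * ε ^ n‖ :=
  stmt11_general b n
end
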